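/- arXiv:1107.0733 — 3 statements merged into one kernel-verified Lean document; each statement's English description precedes it below -/
import Mathlib

section
/- Let β0, β2, β3, β4, β5, w be elements of an integral domain of characteristic 0, and set a1 = β5, a2 = β4*w, a3 = β3*w^2, a4 = β2*w^3, a6 = β0*w^5. Then the discriminant Δ of the associated Weierstrass equation (defined via Deligne's formulaire) is divisible by w^5. -/
/-!
The Tate form makes `w² ∣ b₄` and `w⁴ ∣ b₆`, so `w⁴` factors out of `4Δ`. The split-`I₅`
tuning makes `b₂ c₆ - c₄²` (where `b₄ = w² c₄`, `b₆ = w⁴ c₆`) divisible by `4w`: the products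
`β₅² · β₃²` cancel. Hence the only term of `4Δ` without a further factor `w`, namely
`-b₂² w⁴ (b₂ c₆ - c₄²)`, carries `4w⁵`, and the coefficients `32, 108, 36` of the remaining
terms are multiples of `4`. So `4Δ = 4 w⁵ Q` and `4` cancels in characteristic `0`.
-/

theorem four_mul_discr_eq_four_mul_pow_five_mul {R : Type*} [CommRing R]
    {w b2 b4 b6 c4 c6 e : R} (hb4 : b4 = w ^ 2 * c4) (hb6 : b6 = w ^ 4 * c6)
    (hI5 : b2 * c6 - c4 ^ 2 = 4 * w * e) :
    -(b2 ^ 2 * (b2 * b6 - b4 ^ 2)) - 32 * b4 ^ 3 - 108 * b6 ^ 2 + 36 * b2 * b4 * b6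
      = 4 * (w ^ 5 * (w * (9 * b2 * c4 * c6 - 8 * c4 ^ 3 - 27 * w ^ 2 * c6 ^ 2) - b2 ^ 2 * e)) := by
  subst hb4 hb6
  linear_combination (-(b2 ^ 2) * w ^ 4) * hI5

/-- For the SU(5) specialization `a1 = β5, a2 = β4 w, a3 = β3 w², a4 = β2 w³, a6 = β0 w⁵`,
the discriminant `Δ` of the Weierstrass equation is divisible by `w⁵`.
(Since `Δ` involves the coefficient `1/4`, it is characterized here by the
equivalent integral relation `4 Δ = -b2²(b2 b6 - b4²) - 32 b4³ - 108 b6² + 36 b2 b4 b6`.) -/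
theorem stmt_3 {R : Type*} [CommRing R] [IsDomain R] [CharZero R]
    (β0 β2 β3 β4 β5 w a1 a2 a3 a4 a6 b2 b4 b6 Δ : R)
    (ha1 : a1 = β5) (ha2 : a2 = β4 * w) (ha3 : a3 = β3 * w ^ 2)
    (ha4 : a4 = β2 * w ^ 3) (ha6 : a6 = β0 * w ^ 5)
    (hb2 : b2 = a1 ^ 2 + 4 * a2)
    (hb4 : b4 = a1 * a3 + 2 * a4)
    (hb6 : b6 = a3 ^ 2 + 4 * a6)
    (hΔ : 4 * Δ = -(b2 ^ 2 * (b2 * b6 - b4 ^ 2)) - 32 * b4 ^ 3 - 108 * b6 ^ 2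
        + 36 * b2 * b4 * b6) :
    w ^ 5 ∣ Δ := by
  subst a1 a2 a3 a4 a6
  have hc4 : b4 = w ^ 2 * (β3 * β5 + 2 * β2 * w) := by rw [hb4]; ring
  have hc6 : b6 = w ^ 4 * (β3 ^ 2 + 4 * β0 * w) := by rw [hb6]; ring
  have hI5 : b2 * (β3 ^ 2 + 4 * β0 * w) - (β3 * β5 + 2 * β2 * w) ^ 2
      = 4 * w * (β0 * β5 ^ 2 + β3 ^ 2 * β4 - β2 * β3 * β5 + (4 * β0 * β4 - β2 ^ 2) * w) := by
    rw [hb2]; ring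
  exact ⟨_, mul_left_cancel₀ (by norm_num : (4 : R) ≠ 0)
    (hΔ.trans (four_mul_discr_eq_four_mul_pow_five_mul hc4 hc6 hI5))⟩
end

section
/- With the SU(5) specialization a1 = β5, a2 = β4*w, a3 = β3*w^2, a4 = β2*w^3, a6 = β0*w^5 (over a polynomial ring in β0,β2,β3,β4,β5,w over Q), write Δ = -w^5 * Δ'. Then Δ' is congruent to β5^4 * P modulo the ideal (w), where P = β3^2*β4 - β2*β3*β5 + β0*β5^2. Equivalently, Δ + w^5*β5^4*P ∈ (w^6). -/
/-!
In the SU(5) Tate form, `b₄ ∈ (w²)`, `b₆ ∈ (w⁴)` and `b₈ ≡ w⁵ P` modulo `w⁶`, so in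
`Δ = -b₂² b₈ - 8 b₄³ - 27 b₆² + 9 b₂ b₄ b₆` every term except the first lies in `(w⁶)`, while
`-b₂² b₈ ≡ -β5⁴ w⁵ P` because `b₂ ≡ β5²` modulo `w`. The formulaire expression for `Δ`, with its
factor `1/4`, is Mathlib's `Δ` once `4 b₈ = b₂ b₆ - b₄²` is used.
-/

namespace WeierstrassCurve

variable {R : Type*} [CommRing R]

lemma Δ_eq_of_four_mul_eq_one (W : WeierstrassCurve R) {q : R} (hq : 4 * q = 1) :
    W.Δ = -q * W.b₂ ^ 2 * (W.b₂ * W.b₆ - W.b₄ ^ 2) - 8 * W.b₄ ^ 3 - 27 * W.b₆ ^ 2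
      + 9 * W.b₂ * W.b₄ * W.b₆ := by
  rw [Δ]
  linear_combination (W.b₂ ^ 2 * W.b₈) * hq - (q * W.b₂ ^ 2) * W.b_relation

lemma pow_six_dvd_Δ_add_b₂_sq_mul_b₈ (W : WeierstrassCurve R) {w : R} (h₄ : w ^ 2 ∣ W.b₄)
    (h₆ : w ^ 4 ∣ W.b₆) : w ^ 6 ∣ W.Δ + W.b₂ ^ 2 * W.b₈ := by
  obtain ⟨c₄, hc₄⟩ := h₄
  obtain ⟨c₆, hc₆⟩ := h₆
  refine ⟨-8 * c₄ ^ 3 - 27 * w ^ 2 * c₆ ^ 2 + 9 * W.b₂ * c₄ * c₆, ?_⟩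
  rw [Δ, hc₄, hc₆]
  ring

/-- The Tate form of an `I₅` fiber along the divisor `w = 0`. -/
def su5 (β0 β2 β3 β4 β5 w : R) : WeierstrassCurve R :=
  ⟨β5, β4 * w, β3 * w ^ 2, β2 * w ^ 3, β0 * w ^ 5⟩

def su5MatterPoly (β0 β2 β3 β4 β5 : R) : R :=
  β3 ^ 2 * β4 - β2 * β3 * β5 + β0 * β5 ^ 2

section su5

variable (β0 β2 β3 β4 β5 w : R)

lemma su5_b₂ : (su5 β0 β2 β3 β4 β5 w).b₂ = β5 ^ 2 + 4 * β4 * w := by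
  simp only [su5, b₂]
  ring

lemma su5_b₄ : (su5 β0 β2 β3 β4 β5 w).b₄ = w ^ 2 * (β3 * β5 + 2 * β2 * w) := by
  simp only [su5, b₄]
  ring

lemma su5_b₆ : (su5 β0 β2 β3 β4 β5 w).b₆ = w ^ 4 * (β3 ^ 2 + 4 * β0 * w) := by
  simp only [su5, b₆]
  ring

lemma su5_b₈ : (su5 β0 β2 β3 β4 β5 w).b₈
    = w ^ 5 * (su5MatterPoly β0 β2 β3 β4 β5 + w * (4 * β0 * β4 - β2 ^ 2)) := by
  simp only [su5, su5MatterPoly, b₈]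
  ring

lemma pow_six_dvd_su5_Δ_add :
    w ^ 6 ∣ (su5 β0 β2 β3 β4 β5 w).Δ + w ^ 5 * β5 ^ 4 * su5MatterPoly β0 β2 β3 β4 β5 := by
  set W := su5 β0 β2 β3 β4 β5 w
  set P := su5MatterPoly β0 β2 β3 β4 β5
  have hΔ : w ^ 6 ∣ W.Δ + W.b₂ ^ 2 * W.b₈ :=
    W.pow_six_dvd_Δ_add_b₂_sq_mul_b₈ ⟨_, su5_b₄ ..⟩ ⟨_, su5_b₆ ..⟩
  have hlead : w ^ 6 ∣ W.b₂ ^ 2 * W.b₈ - w ^ 5 * β5 ^ 4 * P := by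
    rw [su5_b₂, su5_b₈]
    exact ⟨(8 * β5 ^ 2 * β4 + 16 * β4 ^ 2 * w) * P
      + (β5 ^ 2 + 4 * β4 * w) ^ 2 * (4 * β0 * β4 - β2 ^ 2), by ring⟩
  convert dvd_sub hΔ hlead using 1
  ring

end su5

end WeierstrassCurve

open MvPolynomial in
/-- For the SU(5) model over `ℚ[β0,β2,β3,β4,β5,w]`, writing `Δ = -w⁵ Δ'`, the factor `Δ'`
is congruent to `β5⁴ P` modulo `(w)`, where `P = β3²β4 - β2β3β5 + β0β5²`;
equivalently `Δ + w⁵ β5⁴ P ∈ (w⁶)`. -/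
theorem stmt_4 :
    let β0 : MvPolynomial (Fin 6) ℚ := X 0
    let β2 : MvPolynomial (Fin 6) ℚ := X 1
    let β3 : MvPolynomial (Fin 6) ℚ := X 2
    let β4 : MvPolynomial (Fin 6) ℚ := X 3
    let β5 : MvPolynomial (Fin 6) ℚ := X 4
    let w : MvPolynomial (Fin 6) ℚ := X 5
    let a1 := β5
    let a2 := β4 * w
    let a3 := β3 * w ^ 2
    let a4 := β2 * w ^ 3
    let a6 := β0 * w ^ 5
    let b2 := a1 ^ 2 + 4 * a2
    let b4 := a1 * a3 + 2 * a4
    let b6 := a3 ^ 2 + 4 * a6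
    let Δ := -(C (1 / 4 : ℚ)) * b2 ^ 2 * (b2 * b6 - b4 ^ 2) - 8 * b4 ^ 3 - 27 * b6 ^ 2
        + 9 * b2 * b4 * b6
    let P := β3 ^ 2 * β4 - β2 * β3 * β5 + β0 * β5 ^ 2
    Δ + w ^ 5 * β5 ^ 4 * P ∈ Ideal.span {w ^ 6} := by
  intro β0 β2 β3 β4 β5 w a1 a2 a3 a4 a6 b2 b4 b6 Δ P
  have h4 : (4 : MvPolynomial (Fin 6) ℚ) * C (1 / 4) = 1 := by
    rw [← map_ofNat C 4, ← map_mul]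
    norm_num
  have hΔ : Δ = (WeierstrassCurve.su5 β0 β2 β3 β4 β5 w).Δ := by
    rw [WeierstrassCurve.Δ_eq_of_four_mul_eq_one _ h4]
    simp only [Δ, b2, b4, b6, a1, a2, a3, a4, a6, WeierstrassCurve.su5, WeierstrassCurve.b₂,
      WeierstrassCurve.b₄, WeierstrassCurve.b₆]
    ring
  rw [hΔ, Ideal.mem_span_singleton]
  exact WeierstrassCurve.pow_six_dvd_su5_Δ_add β0 β2 β3 β4 β5 w
end

section
/- Let B12 ⊂ ℂ^5 × ℙ^1 × ℙ^1 be defined by u1*α₊ - σ₊*v1 = 0, u2*α₋ - σ₋*v2 = 0, α₊*α₋ - σ₊*σ₋*u3 = 0, and let π : B12 → ℂ^5 be the projection. Then the fiber of π over the origin (0,0,0,0,0) is exactly the subvariety {α₊*α₋ = 0} ⊂ ℙ^1 × ℙ^1, which equals the union of the two lines {[0:1]} × ℙ^1 and ℙ^1 × {[0:1]}; these two lines intersect in exactly one point, ([0:1],[0:1]). -/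
theorem small_resolution_fiber_origin_iff {R : Type*} [CommRing R] (αp σp αm σm : R) :
    ((0 : R) * αp - σp * 0 = 0 ∧ (0 : R) * αm - σm * 0 = 0 ∧ αp * αm - σp * σm * 0 = 0) ↔
      αp * αm = 0 := by
  simp

theorem exists_ne_zero_eq_smul_zero_one {M : Type*} [MulZeroOneClass M] {a s : M}
    (hne : (a, s) ≠ (0, 0)) (ha : a = 0) : ∃ c : M, c ≠ 0 ∧ (a, s) = (c * 0, c * 1) := by
  subst ha
  exact ⟨s, fun hs => hne (by rw [hs]), by simp⟩

/-- The fiber of the small resolution `B₁₂` over the origin of `ℂ⁵` is exactly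
`{α₊ α₋ = 0} ⊂ ℙ¹ × ℙ¹`, the union of the two rulings `{α₊ = 0}` and `{α₋ = 0}`,
which meet in exactly the single point `([0:1],[0:1])` (stated in terms of homogeneous
coordinates `(α₊,σ₊)`, `(α₋,σ₋)`). -/
theorem stmt_14 :
    (∀ αp σp αm σm : ℂ,
      ((0 : ℂ) * αp - σp * 0 = 0 ∧ (0 : ℂ) * αm - σm * 0 = 0 ∧
        αp * αm - σp * σm * 0 = 0) ↔ αp * αm = 0) ∧
    (∀ αp αm : ℂ, αp * αm = 0 ↔ (αp = 0 ∨ αm = 0)) ∧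
    (∀ αp σp αm σm : ℂ, (αp, σp) ≠ (0, 0) → (αm, σm) ≠ (0, 0) →
      αp = 0 → αm = 0 →
      ∃ c d : ℂ, c ≠ 0 ∧ d ≠ 0 ∧ (αp, σp) = (c * 0, c * 1) ∧ (αm, σm) = (d * 0, d * 1)) := by
  refine ⟨small_resolution_fiber_origin_iff, fun _ _ => mul_eq_zero, ?_⟩
  intro αp σp αm σm hp hm hαp hαm
  obtain ⟨c, hc, hpc⟩ := exists_ne_zero_eq_smul_zero_one hp hαp
  obtain ⟨d, hd, hmd⟩ := exists_ne_zero_eq_smul_zero_one hm hαm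
  exact ⟨c, d, hc, hd, hpc, hmd⟩
end
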